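/- Let M be a monomial ideal with lcm-lattice L_M and let m ≠ 1 in L_M. For each element m' ≠ 1 of L_M covered by m let A_{m'} be its atom-support, and let Δ_m be the simplicial complex on vertex set A_m whose facets are the A_{m'} for m' covered by m. Then for all i ≥ rk(m), the reduced homology H̃_{i−1}(Δ_m; k) vanishes. -/

import Mathlib

open scoped Classical

noncomputable section

/-- The faces of cardinality `c` of a simplicial complex `Δ` on vertex set `Fin r`
(encoded as a finite set of finite subsets of `Fin r`). -/
abbrev Face {r : ℕ} (Δ : Finset (Finset (Fin r))) (c : ℕ) : Type :=
  {s : Finset (Fin r) // s ∈ Δ ∧ s.card = c}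

/-- The incidence sign of a codimension-one pair of faces: `(−1)^{position}` if
`t ⊆ s`, and `0` otherwise. -/
def bdryCoef (k : Type*) [Field k] {r : ℕ} (s t : Finset (Fin r)) : k :=
  if t ⊆ s then (-1 : k) ^ ((s \ t).sum fun v => (s.filter fun w => w < v).card) else 0

/-- The boundary map of the (augmented, reduced) simplicial chain complex of `Δ` with
coefficients in `k`, from chains on faces of cardinality `c + 1` (dimension `c`) to
chains on faces of cardinality `c`. -/
def bdry (k : Type*) [Field k] {r : ℕ} (Δ : Finset (Finset (Fin r))) (c : ℕ) :
    (Face Δ (c + 1) → k) →ₗ[k] (Face Δ c → k) :=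
  LinearMap.pi fun t => ∑ s : Face Δ (c + 1), bdryCoef k s.1 t.1 • LinearMap.proj s

/-- Nonvanishing of the reduced homology `H̃_{c−1}(Δ; k)`, i.e. of the homology of the
reduced chain complex at the chains on faces of cardinality `c` (dimension `c − 1`). -/
def HtNonzero (k : Type*) [Field k] {r : ℕ} (Δ : Finset (Finset (Fin r))) : ℕ → Prop
  | 0 => LinearMap.range (bdry k Δ 0) ≠ ⊤
  | c + 1 => LinearMap.ker (bdry k Δ c) ≠ LinearMap.range (bdry k Δ (c + 1))

/-- The atom-support of a multidegree: the indices of generators dividing it. -/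
def aSupp {n r : ℕ} (a : Fin r → (Fin n → ℕ)) (v : Fin n → ℕ) : Finset (Fin r) :=
  Finset.univ.filter fun i => a i ≤ v

/-- The lcm-lattice of the monomial ideal generated by the monomials with exponent
vectors `a i`: all joins (componentwise sups) of subsets of the generators. -/
def latticeL {n r : ℕ} (a : Fin r → (Fin n → ℕ)) : Set (Fin n → ℕ) :=
  {v | ∃ A : Finset (Fin r), v = A.sup a}

/-- `u` is covered by `v` in the lcm-lattice. -/
def covIn {n r : ℕ} (a : Fin r → (Fin n → ℕ)) (u v : Fin n → ℕ) : Prop :=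
  u ∈ latticeL a ∧ u < v ∧ ∀ w ∈ latticeL a, ¬(u < w ∧ w < v)

/-- The simplicial complex `Δ_m` at `m ≠ 1` in the lcm-lattice: the complex whose
facets are the supports `A_{m'}` of the elements `m'` covered by `m` (this is `{∅}`
when `m` is an atom, since then the only covered element is the bottom `1`). -/
def deltaM {n r : ℕ} (a : Fin r → (Fin n → ℕ)) (m : Fin n → ℕ) :
    Finset (Finset (Fin r)) :=
  Finset.univ.filter fun s => ∃ u, covIn a u m ∧ s ⊆ aSupp a u

/-- The rank of `m` in the lcm-lattice: the maximal length of chains from the bottom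
element (exponent vector `0`, the monomial `1`) to `m`. -/
def rkOf {n r : ℕ} (a : Fin r → (Fin n → ℕ)) (m : Fin n → ℕ) : ℕ :=
  sSup {K : ℕ | ∃ c : Fin (K + 1) → (Fin n → ℕ),
    StrictMono c ∧ (∀ j, c j ∈ latticeL a) ∧ c 0 = 0 ∧ c (Fin.last K) = m}

end

/-
`Δ_m` is the union of the full simplices on the supports `A_u` of the elements `u` covered by
`m`, and `A_u ∩ A_v = A_{u ∧ v}`, where `u ∧ v` is the lcm of the generators dividing both.
By induction on the number of simplices, a union of simplices `A_u` with `rk u < ρ` has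
vanishing reduced homology in dimensions `≥ ρ - 1`: removing a maximal `u`, a Mayer–Vietoris
argument reduces this to the same claim, one dimension lower, for the overlap, which is the
union of the simplices `A_{u ∧ v}` with `rk (u ∧ v) < rk u`; a single simplex is a cone, hence
acyclic. All chains are taken in the augmented chain complex of the full simplex on the
generators, a chain of a subcomplex being a chain supported in it.
-/

open Finset

section Chains

variable {k : Type*} [Field k] {r : ℕ}

lemma card_filter_lt_insert_add_card_filter_lt_insert {t : Finset (Fin r)} {v x : Fin r}
    (hvx : v ≠ x) (hv : v ∉ t) (hx : x ∉ t) :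
    #{w ∈ insert v t | w < x} + #{w ∈ insert x t | w < v}
      = #{w ∈ t | w < x} + #{w ∈ t | w < v} + 1 := by
  rcases hvx.lt_or_gt with h | h
  · rw [filter_insert, if_pos h, filter_insert, if_neg h.not_gt,
      card_insert_of_notMem (by simp [hv])]
    ring
  · rw [filter_insert, if_neg h.not_gt, filter_insert, if_pos h,
      card_insert_of_notMem (by simp [hx])]
    ring

lemma bdryCoef_insert {t : Finset (Fin r)} {v : Fin r} (hv : v ∉ t) :
    bdryCoef k (insert v t) t = (-1) ^ #{w ∈ t | w < v} := by
  rw [bdryCoef, if_pos (subset_insert v t), insert_sdiff_cancel hv, sum_singleton,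
    filter_insert, if_neg (lt_irrefl v)]

lemma bdryCoef_mul_self {s t : Finset (Fin r)} (h : t ⊆ s) :
    bdryCoef k s t * bdryCoef k s t = 1 := by
  rw [bdryCoef, if_pos h, ← mul_pow]
  norm_num

lemma bdryCoef_insert_insert_mul {t : Finset (Fin r)} {v x : Fin r} (hvx : v ≠ x)
    (hv : v ∉ t) (hx : x ∉ t) :
    bdryCoef k (insert x (insert v t)) (insert v t)
        * bdryCoef k (insert x (insert v t)) (insert x t)
      = -(bdryCoef k (insert v t) t * bdryCoef k (insert x t) t) := by
  rw [bdryCoef_insert (by simp [hvx.symm, hx]), insert_comm x v t,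
    bdryCoef_insert (by simp [hvx, hv]), bdryCoef_insert hv, bdryCoef_insert hx, ← pow_add,
    ← pow_add, card_filter_lt_insert_add_card_filter_lt_insert hvx hv hx, pow_succ]
  ring

variable (k) in
/-- The boundary map of the augmented chain complex of the full simplex on `Fin r`. -/
def simplexBoundary : (Finset (Fin r) → k) →ₗ[k] (Finset (Fin r) → k) :=
  LinearMap.pi fun t => ∑ v ∈ tᶜ, bdryCoef k (insert v t) t • LinearMap.proj (insert v t)

lemma simplexBoundary_apply (f : Finset (Fin r) → k) (t : Finset (Fin r)) :
    simplexBoundary k f t = ∑ v ∈ tᶜ, bdryCoef k (insert v t) t * f (insert v t) := by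
  simp [simplexBoundary]

lemma simplexBoundary_simplexBoundary (f : Finset (Fin r) → k) :
    simplexBoundary k (simplexBoundary k f) = 0 := by
  funext t
  simp only [simplexBoundary_apply, mul_sum, compl_insert, Pi.zero_apply]
  rw [sum_sigma']
  refine sum_involution (fun p _ => ⟨p.2, p.1⟩) ?_ ?_ ?_ fun _ _ => rfl
  · rintro ⟨v, x⟩ hp
    simp only [mem_sigma, mem_compl, mem_erase] at hp
    obtain ⟨hv, hxv, hx⟩ := hp
    dsimp only
    rw [insert_comm v x t]
    linear_combination f (insert x (insert v t)) *
      (bdryCoef k (insert v t) t * bdryCoef k (insert x (insert v t)) (insert x t)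
          * bdryCoef_insert_insert_mul (k := k) hxv.symm hv hx
        - bdryCoef k (insert x (insert v t)) (insert v t) * bdryCoef k (insert v t) t
          * bdryCoef_mul_self (k := k) (insert_subset_insert x (subset_insert v t))
        - bdryCoef k (insert x t) t * bdryCoef k (insert x (insert v t)) (insert x t)
          * bdryCoef_mul_self (k := k) (subset_insert v t))
  · rintro ⟨v, x⟩ hp - h
    simp only [mem_sigma, mem_erase] at hp
    exact hp.2.1 (congrArg Sigma.fst h)
  · rintro ⟨v, x⟩ hp
    simp only [mem_sigma, mem_compl, mem_erase] at hp ⊢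
    exact ⟨hp.2.2, hp.2.1.symm, hp.1⟩

variable (k) in
def coneHomotopy (v₀ : Fin r) : (Finset (Fin r) → k) →ₗ[k] (Finset (Fin r) → k) :=
  LinearMap.pi fun s =>
    if v₀ ∈ s then bdryCoef k s (s.erase v₀) • LinearMap.proj (s.erase v₀) else 0

lemma coneHomotopy_of_mem {v₀ : Fin r} {s : Finset (Fin r)} (hv : v₀ ∈ s)
    (f : Finset (Fin r) → k) :
    coneHomotopy k v₀ f s = bdryCoef k s (s.erase v₀) * f (s.erase v₀) := by
  simp [coneHomotopy, hv]

lemma coneHomotopy_insert {v₀ : Fin r} {t : Finset (Fin r)} (hv : v₀ ∉ t)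
    (f : Finset (Fin r) → k) :
    coneHomotopy k v₀ f (insert v₀ t) = bdryCoef k (insert v₀ t) t * f t := by
  rw [coneHomotopy_of_mem (mem_insert_self v₀ t), erase_insert hv]

lemma coneHomotopy_of_notMem {v₀ : Fin r} {s : Finset (Fin r)} (hv : v₀ ∉ s)
    (f : Finset (Fin r) → k) : coneHomotopy k v₀ f s = 0 := by
  simp [coneHomotopy, hv]

theorem simplexBoundary_coneHomotopy_add (v₀ : Fin r) (f : Finset (Fin r) → k) :
    simplexBoundary k (coneHomotopy k v₀ f) + coneHomotopy k v₀ (simplexBoundary k f) = f := by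
  funext t
  rw [Pi.add_apply]
  by_cases ht : v₀ ∈ t
  · obtain ⟨t, hv, rfl⟩ : ∃ t', v₀ ∉ t' ∧ t = insert v₀ t' :=
      ⟨t.erase v₀, notMem_erase _ _, (insert_erase ht).symm⟩
    have hcancel : ∀ x ∈ (insert v₀ t)ᶜ,
        bdryCoef k (insert x (insert v₀ t)) (insert v₀ t)
            * coneHomotopy k v₀ f (insert x (insert v₀ t))
          + bdryCoef k (insert v₀ t) t * (bdryCoef k (insert x t) t * f (insert x t)) = 0 := by
      intro x hx
      have hx' : x ≠ v₀ ∧ x ∉ t := by simpa using hx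
      rw [coneHomotopy_of_mem (by simp), erase_insert_of_ne hx'.1, erase_insert hv,
        ← mul_assoc, ← mul_assoc, bdryCoef_insert_insert_mul hx'.1.symm hv hx'.2]
      ring
    rw [coneHomotopy_insert hv, simplexBoundary_apply, simplexBoundary_apply,
      ← add_sum_erase _ _ (mem_compl.2 hv), ← compl_insert, mul_add, ← mul_assoc,
      bdryCoef_mul_self (subset_insert v₀ t), one_mul, mul_sum, add_left_comm,
      ← sum_add_distrib, sum_eq_zero hcancel, add_zero]
  · rw [coneHomotopy_of_notMem ht, add_zero, simplexBoundary_apply,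
      sum_eq_single_of_mem v₀ (mem_compl.2 ht), coneHomotopy_insert ht, ← mul_assoc,
      bdryCoef_mul_self (subset_insert v₀ t), one_mul]
    intro x _ hx
    rw [coneHomotopy_of_notMem (by simp [Ne.symm hx, ht]), mul_zero]

variable (R : Type*) [Semiring R] in
def chainsOn (S : Set (Finset (Fin r))) : Submodule R (Finset (Fin r) → R) where
  carrier := {f | Function.support f ⊆ S}
  add_mem' hf hg := (Function.support_add _ _).trans (Set.union_subset hf hg)
  zero_mem' := by simp
  smul_mem' c _ hf := (Function.support_const_smul_subset c _).trans hf

lemma mem_chainsOn {R : Type*} [Semiring R] {S : Set (Finset (Fin r))} {f : Finset (Fin r) → R} :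
    f ∈ chainsOn R S ↔ Function.support f ⊆ S := Iff.rfl

lemma chainsOn_mono {R : Type*} [Semiring R] {S T : Set (Finset (Fin r))} (h : S ⊆ T) :
    chainsOn R S ≤ chainsOn R T :=
  fun _ hf => hf.trans h

lemma mem_chainsOn_inter {R : Type*} [Semiring R] {S T : Set (Finset (Fin r))}
    {f : Finset (Fin r) → R} (hS : f ∈ chainsOn R S) (hT : f ∈ chainsOn R T) :
    f ∈ chainsOn R (S ∩ T) :=
  Set.subset_inter hS hT

lemma indicator_mem_chainsOn {R : Type*} [Semiring R] {S : Set (Finset (Fin r))}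
    {f : Finset (Fin r) → R} (hf : f ∈ chainsOn R S) (T : Set (Finset (Fin r))) :
    T.indicator f ∈ chainsOn R (T ∩ S) := by
  rw [mem_chainsOn, Set.support_indicator]
  exact Set.inter_subset_inter_right T hf

lemma simplexBoundary_mem_chainsOn {S T : Set (Finset (Fin r))}
    (hST : ∀ t, ∀ v ∉ t, insert v t ∈ S → t ∈ T) {f : Finset (Fin r) → k}
    (hf : f ∈ chainsOn k S) : simplexBoundary k f ∈ chainsOn k T := by
  intro t ht
  rw [Function.mem_support, simplexBoundary_apply] at ht
  obtain ⟨v, hv, hne⟩ := exists_ne_zero_of_sum_ne_zero ht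
  exact hST t v (mem_compl.1 hv) (hf (right_ne_zero_of_mul hne))

lemma simplexBoundary_mem_chainsOn_of_isLowerSet {S : Set (Finset (Fin r))} (hS : IsLowerSet S)
    {f : Finset (Fin r) → k} (hf : f ∈ chainsOn k S) : simplexBoundary k f ∈ chainsOn k S :=
  simplexBoundary_mem_chainsOn (fun t v _ h => hS (subset_insert v t) h) hf

lemma simplexBoundary_mem_chainsOn_le_card {d : ℕ} {f : Finset (Fin r) → k}
    (hf : f ∈ chainsOn k {s | d + 1 ≤ #s}) :
    simplexBoundary k f ∈ chainsOn k {s | d ≤ #s} :=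
  simplexBoundary_mem_chainsOn (fun t v hv (h : d + 1 ≤ #(insert v t)) => by
    rw [card_insert_of_notMem hv] at h
    exact Nat.le_of_succ_le_succ h) hf

lemma coneHomotopy_mem_chainsOn {v₀ : Fin r} {S T : Set (Finset (Fin r))}
    (hST : ∀ t, v₀ ∉ t → t ∈ S → insert v₀ t ∈ T) {f : Finset (Fin r) → k}
    (hf : f ∈ chainsOn k S) : coneHomotopy k v₀ f ∈ chainsOn k T := by
  intro s hs
  by_cases hv : v₀ ∈ s
  · rw [← insert_erase hv] at hs ⊢
    rw [Function.mem_support, coneHomotopy_insert (notMem_erase _ _)] at hs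
    exact hST _ (notMem_erase _ _) (hf (right_ne_zero_of_mul hs))
  · exact absurd (coneHomotopy_of_notMem hv f) hs

theorem exists_simplexBoundary_eq_of_mem_chainsOn_Iic {A : Finset (Fin r)} {d : ℕ}
    {f : Finset (Fin r) → k} (hfA : f ∈ chainsOn k (Set.Iic A))
    (hfd : f ∈ chainsOn k {s | d + 1 ≤ #s}) (hf : simplexBoundary k f = 0) :
    ∃ g ∈ chainsOn k (Set.Iic A),
      g ∈ chainsOn k {s | d + 2 ≤ #s} ∧ simplexBoundary k g = f := by
  rcases A.eq_empty_or_nonempty with rfl | ⟨v₀, hv₀⟩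
  · refine ⟨0, zero_mem _, zero_mem _, ?_⟩
    rw [map_zero]
    funext s
    by_contra hs
    have hs_empty : s = ∅ := subset_empty.1 (hfA (Ne.symm hs))
    have hs_card : d + 1 ≤ #s := hfd (Ne.symm hs)
    simp [hs_empty] at hs_card
  · refine ⟨coneHomotopy k v₀ f, ?_, ?_, ?_⟩
    · exact coneHomotopy_mem_chainsOn (fun t _ (h : t ⊆ A) => insert_subset hv₀ h) hfA
    · exact coneHomotopy_mem_chainsOn (fun t hv (h : d + 1 ≤ #t) =>
        show d + 2 ≤ #(insert v₀ t) by rw [card_insert_of_notMem hv]; omega) hfd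
    · simpa [hf] using simplexBoundary_coneHomotopy_add v₀ f

end Chains

section LcmLattice

variable {n r : ℕ} {a : Fin r → (Fin n → ℕ)}

lemma mem_aSupp {i : Fin r} {u : Fin n → ℕ} : i ∈ aSupp a u ↔ a i ≤ u := by
  simp [aSupp]

variable (a) in
noncomputable def latticeInf (u v : Fin n → ℕ) : Fin n → ℕ :=
  (aSupp a u ∩ aSupp a v).sup a

lemma latticeInf_mem (u v : Fin n → ℕ) : latticeInf a u v ∈ latticeL a := ⟨_, rfl⟩

lemma latticeInf_le_left (u v : Fin n → ℕ) : latticeInf a u v ≤ u :=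
  Finset.sup_le fun _ hi => mem_aSupp.1 (mem_inter.1 hi).1

lemma latticeInf_le_right (u v : Fin n → ℕ) : latticeInf a u v ≤ v :=
  Finset.sup_le fun _ hi => mem_aSupp.1 (mem_inter.1 hi).2

lemma latticeInf_lt_left {u v : Fin n → ℕ} (h : ¬ u ≤ v) : latticeInf a u v < u :=
  (latticeInf_le_left u v).lt_of_ne fun heq => h (heq ▸ latticeInf_le_right u v)

lemma aSupp_latticeInf (u v : Fin n → ℕ) :
    aSupp a (latticeInf a u v) = aSupp a u ∩ aSupp a v := by
  ext i
  refine ⟨fun hi => ?_, fun hi => mem_aSupp.2 (Finset.le_sup hi)⟩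
  have hi := mem_aSupp.1 hi
  exact mem_inter.2 ⟨mem_aSupp.2 (hi.trans (latticeInf_le_left u v)),
    mem_aSupp.2 (hi.trans (latticeInf_le_right u v))⟩

variable (a) in
def supportComplex (W : Finset (Fin n → ℕ)) : Set (Finset (Fin r)) :=
  {s | ∃ u ∈ W, s ⊆ aSupp a u}

lemma isLowerSet_supportComplex (W : Finset (Fin n → ℕ)) :
    IsLowerSet (supportComplex a W) :=
  fun _ _ hts ⟨u, hu, hs⟩ => ⟨u, hu, hts.trans hs⟩

lemma supportComplex_empty : supportComplex a (∅ : Finset (Fin n → ℕ)) = ∅ := by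
  simp [supportComplex]

lemma supportComplex_image_latticeInf (W : Finset (Fin n → ℕ)) (u : Fin n → ℕ) :
    supportComplex a (W.image (latticeInf a u)) = supportComplex a W ∩ Set.Iic (aSupp a u) := by
  ext s
  simp only [supportComplex, mem_image, exists_exists_and_eq_and, aSupp_latticeInf,
    subset_inter_iff, Set.mem_inter_iff, Set.mem_Iic, Set.mem_ofPred_eq]
  exact ⟨fun ⟨v, hv, hsu, hsv⟩ => ⟨⟨v, hv, hsv⟩, hsu⟩,
    fun ⟨⟨v, hv, hsv⟩, hsu⟩ => ⟨v, hv, hsu, hsv⟩⟩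

lemma compl_Iic_inter_supportComplex_subset (W : Finset (Fin n → ℕ)) (u : Fin n → ℕ) :
    (Set.Iic (aSupp a u))ᶜ ∩ supportComplex a W ⊆ supportComplex a (W.erase u) := by
  rintro s ⟨hsu, v, hv, hsv⟩
  exact ⟨v, mem_erase.2 ⟨fun h => hsu (h ▸ hsv), hv⟩, hsv⟩

variable (a) in
def chainLengths (u : Fin n → ℕ) : Set ℕ :=
  {K | ∃ c : Fin (K + 1) → (Fin n → ℕ),
    StrictMono c ∧ (∀ j, c j ∈ latticeL a) ∧ c 0 = 0 ∧ c (Fin.last K) = u}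

lemma bddAbove_chainLengths (u : Fin n → ℕ) : BddAbove (chainLengths a u) := by
  refine ⟨#(Icc 0 u), fun K ⟨c, hc, _, _, hlast⟩ => ?_⟩
  have hmem : ∀ j, c j ∈ Icc 0 u := fun j =>
    mem_Icc.2 ⟨fun _ => Nat.zero_le _, hlast ▸ hc.monotone (Fin.le_last j)⟩
  have := Fintype.card_le_of_injective (fun j => (⟨c j, hmem j⟩ : Icc 0 u))
    fun _ _ h => hc.injective (congrArg Subtype.val h)
  simp only [Fintype.card_fin, Fintype.card_coe] at this
  omega

lemma zero_mem_chainLengths_zero : 0 ∈ chainLengths a 0 :=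
  ⟨fun _ => 0, fun i j h => (h.ne (Subsingleton.elim (α := Fin 1) i j)).elim,
    fun _ => ⟨∅, rfl⟩, rfl, rfl⟩

lemma succ_mem_chainLengths {K : ℕ} {u w : Fin n → ℕ} (hK : K ∈ chainLengths a u)
    (huw : u < w) (hw : w ∈ latticeL a) : K + 1 ∈ chainLengths a w := by
  obtain ⟨c, hc, hcL, hc0, hcK⟩ := hK
  have hcw : ∀ i, c i < w := fun i => (hcK ▸ hc.monotone (Fin.le_last i)).trans_lt huw
  refine ⟨Fin.snoc c w, fun i j hij => ?_, Fin.lastCases (by simpa using hw) (by simpa using hcL),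
    by simpa using hc0, by simp⟩
  induction j using Fin.lastCases with
  | last =>
    obtain ⟨i, rfl⟩ := Fin.exists_castSucc_eq.2 (Fin.ne_last_of_lt hij)
    simpa using hcw i
  | cast j =>
    obtain ⟨i, rfl⟩ :=
      Fin.exists_castSucc_eq.2 (Fin.ne_last_of_lt (hij.trans (Fin.castSucc_lt_last j)))
    simpa using hc (Fin.castSucc_lt_castSucc_iff.1 hij)

lemma rkOf_mem_chainLengths {u : Fin n → ℕ} (hu : u ∈ latticeL a) :
    rkOf a u ∈ chainLengths a u := by
  refine Nat.sSup_mem ?_ (bddAbove_chainLengths u)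
  rcases eq_or_ne u 0 with rfl | hu0
  · exact ⟨0, zero_mem_chainLengths_zero⟩
  · exact ⟨1, succ_mem_chainLengths zero_mem_chainLengths_zero (pos_of_ne_zero hu0) hu⟩

lemma rkOf_lt_rkOf {u w : Fin n → ℕ} (hu : u ∈ latticeL a) (hw : w ∈ latticeL a)
    (huw : u < w) : rkOf a u < rkOf a w :=
  le_csSup (bddAbove_chainLengths w) (succ_mem_chainLengths (rkOf_mem_chainLengths hu) huw hw)

lemma rkOf_latticeInf_lt_rkOf {W : Finset (Fin n → ℕ)} {u v : Fin n → ℕ}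
    (hu : Maximal (· ∈ W) u) (huL : u ∈ latticeL a) (hv : v ∈ W.erase u) :
    rkOf a (latticeInf a u v) < rkOf a u := by
  obtain ⟨hvu, hvW⟩ := mem_erase.1 hv
  exact rkOf_lt_rkOf (latticeInf_mem u v) huL
    (latticeInf_lt_left fun huv => hvu (le_antisymm (hu.2 hvW huv) huv))

end LcmLattice

section MayerVietoris

variable {k : Type*} [Field k] {n r : ℕ} {a : Fin r → (Fin n → ℕ)}

lemma simplexBoundary_mem_chainsOn_image_latticeInf {W : Finset (Fin n → ℕ)} {u : Fin n → ℕ}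
    {x y : Finset (Fin r) → k} (hx : x ∈ chainsOn k (supportComplex a W))
    (hy : y ∈ chainsOn k (Set.Iic (aSupp a u)))
    (hxy : simplexBoundary k x = -simplexBoundary k y) :
    simplexBoundary k x ∈ chainsOn k (supportComplex a (W.image (latticeInf a u))) := by
  rw [supportComplex_image_latticeInf]
  refine mem_chainsOn_inter
    (simplexBoundary_mem_chainsOn_of_isLowerSet (isLowerSet_supportComplex _) hx) ?_
  rw [hxy]
  exact neg_mem (simplexBoundary_mem_chainsOn_of_isLowerSet (isLowerSet_Iic _) hy)

theorem exists_simplexBoundary_eq_of_mem_chainsOn_supportComplex (ρ : ℕ)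
    (W : Finset (Fin n → ℕ)) (hW : ∀ u ∈ W, u ∈ latticeL a ∧ rkOf a u < ρ)
    {f : Finset (Fin r) → k} (hfW : f ∈ chainsOn k (supportComplex a W))
    (hfρ : f ∈ chainsOn k {s | ρ ≤ #s}) (hf : simplexBoundary k f = 0) :
    ∃ g ∈ chainsOn k (supportComplex a W), g ∈ chainsOn k {s | ρ + 1 ≤ #s} ∧
      simplexBoundary k g = f := by
  rcases W.eq_empty_or_nonempty with rfl | hW₀
  · rw [supportComplex_empty, mem_chainsOn, Set.subset_empty_iff,
      Function.support_eq_empty_iff] at hfW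
    exact ⟨0, zero_mem _, zero_mem _, by rw [map_zero, hfW]⟩
  obtain ⟨u, hu⟩ := W.exists_maximal hW₀
  obtain ⟨huL, hu_rk⟩ := hW u hu.1
  obtain ⟨ρ, rfl⟩ : ∃ ρ', ρ = ρ' + 1 := ⟨ρ - 1, by omega⟩
  set x := (Set.Iic (aSupp a u))ᶜ.indicator f with hx
  set y := (Set.Iic (aSupp a u)).indicator f with hy
  have hxW : x ∈ chainsOn k (supportComplex a (W.erase u)) :=
    chainsOn_mono (compl_Iic_inter_supportComplex_subset W u) (indicator_mem_chainsOn hfW _)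
  have hyA : y ∈ chainsOn k (Set.Iic (aSupp a u)) :=
    chainsOn_mono Set.inter_subset_left (indicator_mem_chainsOn hfW _)
  have hxρ : x ∈ chainsOn k {s | ρ + 1 ≤ #s} :=
    chainsOn_mono Set.inter_subset_right (indicator_mem_chainsOn hfρ _)
  have hyρ : y ∈ chainsOn k {s | ρ + 1 ≤ #s} :=
    chainsOn_mono Set.inter_subset_right (indicator_mem_chainsOn hfρ _)
  have hxy : simplexBoundary k x = -simplexBoundary k y := by
    rw [eq_neg_iff_add_eq_zero, ← map_add, hx, hy, Set.indicator_compl_add_self, hf]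
  have hV : ∀ v ∈ (W.erase u).image (latticeInf a u), v ∈ latticeL a ∧ rkOf a v < ρ := by
    simp only [mem_image]
    rintro _ ⟨v, hv, rfl⟩
    exact ⟨latticeInf_mem u v,
      (rkOf_latticeInf_lt_rkOf hu huL hv).trans_le (Nat.lt_succ_iff.1 hu_rk)⟩
  obtain ⟨w, hwV, hwρ, hw⟩ := exists_simplexBoundary_eq_of_mem_chainsOn_supportComplex ρ _ hV
    (simplexBoundary_mem_chainsOn_image_latticeInf hxW hyA hxy)
    (simplexBoundary_mem_chainsOn_le_card hxρ) (simplexBoundary_simplexBoundary x)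
  rw [supportComplex_image_latticeInf] at hwV
  obtain ⟨p, hpW, hpρ, hp⟩ := exists_simplexBoundary_eq_of_mem_chainsOn_supportComplex (ρ + 1)
    (W.erase u) (fun v hv => hW v (mem_of_mem_erase hv)) (f := x - w)
    (sub_mem hxW (chainsOn_mono Set.inter_subset_left hwV)) (sub_mem hxρ hwρ)
    (by rw [map_sub, hw, sub_self])
  obtain ⟨q, hqA, hqρ, hq⟩ := exists_simplexBoundary_eq_of_mem_chainsOn_Iic (f := y + w)
    (add_mem hyA (chainsOn_mono Set.inter_subset_right hwV)) (add_mem hyρ hwρ)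
    (by rw [map_add, hw, hxy, add_neg_cancel])
  refine ⟨p + q, add_mem (chainsOn_mono ?_ hpW) (chainsOn_mono ?_ hqA), add_mem hpρ hqρ, ?_⟩
  · exact fun s ⟨v, hv, hs⟩ => ⟨v, mem_of_mem_erase hv, hs⟩
  · exact fun s hs => ⟨u, hu.1, hs⟩
  · rw [map_add, hp, hq, sub_add_add_cancel, hx, hy, Set.indicator_compl_add_self]
termination_by W.card
decreasing_by
  · exact card_image_le.trans_lt (card_erase_lt_of_mem hu.1)
  · exact card_erase_lt_of_mem hu.1

end MayerVietoris

section Bridge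

variable {k : Type*} [Field k] {r : ℕ} {Δ : Finset (Finset (Fin r))}

def extendChain {c : ℕ} (z : Face Δ c → k) : Finset (Fin r) → k :=
  fun s => if h : s ∈ Δ ∧ #s = c then z ⟨s, h⟩ else 0

lemma extendChain_apply {c : ℕ} (z : Face Δ c → k) (s : Face Δ c) :
    extendChain z s.1 = z s := by
  simp [extendChain, s.2]

lemma extendChain_zero {c : ℕ} : extendChain (0 : Face Δ c → k) = 0 := by
  funext s
  simp [extendChain]

lemma extendChain_mem_chainsOn {c : ℕ} (z : Face Δ c → k) :
    extendChain z ∈ chainsOn k ((Δ : Set (Finset (Fin r))) ∩ {s | #s = c}) := by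
  intro s hs
  by_contra h
  exact hs (dif_neg h)

lemma bdry_apply {c : ℕ} (z : Face Δ (c + 1) → k) (t : Face Δ c) :
    bdry k Δ c z t = ∑ s : Face Δ (c + 1), bdryCoef k s.1 t.1 * z s := by
  simp [bdry]

lemma bdry_apply_eq_simplexBoundary {c : ℕ} (z : Face Δ (c + 1) → k) {F : Finset (Fin r) → k}
    (hFΔ : F ∈ chainsOn k (Δ : Set (Finset (Fin r))))
    (hF : ∀ s : Face Δ (c + 1), F s.1 = z s)
    (t : Face Δ c) : bdry k Δ c z t = simplexBoundary k F t.1 := by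
  rw [bdry_apply, simplexBoundary_apply]
  symm
  refine sum_bij_ne_zero (fun v hv hne => (⟨insert v t.1, hFΔ (right_ne_zero_of_mul hne),
      by rw [card_insert_of_notMem (mem_compl.1 hv), t.2.2]⟩ : Face Δ (c + 1)))
    (fun _ _ _ => mem_univ _)
    (fun v hv _ w _ _ h => (insert_inj (mem_compl.1 hv)).1 (congrArg Subtype.val h)) ?_
    (fun v _ _ => by rw [← hF])
  intro s _ hne
  obtain ⟨v, hv, hvs⟩ := exists_eq_insert_iff.2
    ⟨by_contra fun h => left_ne_zero_of_mul hne (if_neg h), by rw [s.2.2, t.2.2]⟩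
  refine ⟨v, mem_compl.2 hv, ?_, Subtype.ext hvs⟩
  rwa [hvs, hF s]

lemma simplexBoundary_extendChain (hΔ : IsLowerSet (Δ : Set (Finset (Fin r)))) {c : ℕ}
    (z : Face Δ (c + 1) → k) :
    simplexBoundary k (extendChain z) = extendChain (bdry k Δ c z) := by
  funext t
  by_cases ht : t ∈ Δ ∧ #t = c
  · rw [show t = (⟨t, ht⟩ : Face Δ c).1 from rfl, extendChain_apply,
      bdry_apply_eq_simplexBoundary z (chainsOn_mono Set.inter_subset_left
        (extendChain_mem_chainsOn z)) (extendChain_apply z)]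
  · have hsupp := simplexBoundary_mem_chainsOn (T := (Δ : Set (Finset (Fin r))) ∩ {s | #s = c})
      (fun t v hv (h : insert v t ∈ (Δ : Set (Finset (Fin r))) ∩ {s | #s = c + 1}) =>
        ⟨hΔ (subset_insert v t) h.1, by simpa [card_insert_of_notMem hv] using h.2⟩)
      (extendChain_mem_chainsOn z)
    rw [show extendChain (bdry k Δ c z) t = 0 from dif_neg ht]
    exact Function.notMem_support.1 fun h => ht (hsupp h)

lemma bdry_comp_bdry (hΔ : IsLowerSet (Δ : Set (Finset (Fin r)))) (c : ℕ) :
    bdry k Δ c ∘ₗ bdry k Δ (c + 1) = 0 := by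
  refine LinearMap.ext fun w => funext fun t => ?_
  rw [LinearMap.comp_apply, LinearMap.zero_apply, Pi.zero_apply,
    bdry_apply_eq_simplexBoundary _ (chainsOn_mono Set.inter_subset_left
      (extendChain_mem_chainsOn _)) (extendChain_apply _),
    ← simplexBoundary_extendChain hΔ, simplexBoundary_simplexBoundary, Pi.zero_apply]

end Bridge

section DeltaM

variable {n r : ℕ} {a : Fin r → (Fin n → ℕ)}

variable (a) in
noncomputable def coveredBy (m : Fin n → ℕ) : Finset (Fin n → ℕ) :=
  (univ.image fun A : Finset (Fin r) => A.sup a).filter (covIn a · m)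

lemma mem_coveredBy {m u : Fin n → ℕ} : u ∈ coveredBy a m ↔ covIn a u m := by
  refine ⟨fun h => (mem_filter.1 h).2, fun h => mem_filter.2 ⟨?_, h⟩⟩
  obtain ⟨A, rfl⟩ := h.1
  exact mem_image_of_mem _ (mem_univ A)

lemma coe_deltaM (m : Fin n → ℕ) :
    (deltaM a m : Set (Finset (Fin r))) = supportComplex a (coveredBy a m) := by
  ext s
  simp [deltaM, supportComplex, mem_coveredBy]

end DeltaM

theorem reduced_homology_vanishes_above_rank (k : Type*) [Field k] {n r : ℕ}
    (a : Fin r → (Fin n → ℕ))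
    (m : Fin n → ℕ) (hmL : m ∈ latticeL a) :
    ∀ j : ℕ, rkOf a m ≤ j + 1 →
      LinearMap.ker (bdry k (deltaM a m) j)
        = LinearMap.range (bdry k (deltaM a m) (j + 1)) := by
  intro j hj
  have hΔ : IsLowerSet (deltaM a m : Set (Finset (Fin r))) :=
    coe_deltaM m ▸ isLowerSet_supportComplex _
  refine le_antisymm (fun z hz => ?_) (LinearMap.range_le_ker_iff.2 (bdry_comp_bdry hΔ j))
  have hcyc : simplexBoundary k (extendChain z) = 0 := by
    rw [simplexBoundary_extendChain hΔ, LinearMap.mem_ker.1 hz, extendChain_zero]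
  have hzΔ := extendChain_mem_chainsOn z
  obtain ⟨g, hgΔ, -, hg⟩ := exists_simplexBoundary_eq_of_mem_chainsOn_supportComplex (rkOf a m)
    (coveredBy a m) (fun u hu => ⟨(mem_coveredBy.1 hu).1,
      rkOf_lt_rkOf (mem_coveredBy.1 hu).1 hmL (mem_coveredBy.1 hu).2.1⟩)
    (coe_deltaM m ▸ chainsOn_mono Set.inter_subset_left hzΔ)
    (chainsOn_mono (fun s hs => hj.trans_eq hs.2.symm) hzΔ) hcyc
  refine ⟨fun s => g s.1, funext fun t => ?_⟩
  rw [bdry_apply_eq_simplexBoundary _ (coe_deltaM m ▸ hgΔ) (fun _ => rfl), hg, extendChain_apply]
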